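/- Let A = (Q, q₀, δ, F) be a simple (co-Büchi) linear weak alternating automaton with L(A) ≠ ∅. Then there exist a finite sequence s₀ … s_n of states (s_i ⊆ V), a finite run dag Δ = e₀ … e_n of A over s₀ … s_n with configurations c₀ … c_{n+1}, and some k ≤ n such that c_k = c_{n+1} and for every q ∈ F there is some j with k ≤ j ≤ n and q ∉ c_j. -/

import Mathlib

/-- Transition formulas over atomic propositions `V` and locations `Q`:
propositional formulas built from `true`, `false`, literals `v` / `¬v`,
atoms `q ∈ Q` (occurring only positively), conjunction and disjunction. -/
inductive TransForm (V Q : Type) : Type where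
  | tt : TransForm V Q
  | ff : TransForm V Q
  | pos : V → TransForm V Q
  | neg : V → TransForm V Q
  | atom : Q → TransForm V Q
  | and : TransForm V Q → TransForm V Q → TransForm V Q
  | or : TransForm V Q → TransForm V Q → TransForm V Q

/-- Satisfaction of a transition formula by a pair `(s, X)` with `s ⊆ V`, `X ⊆ Q`. -/
def TransForm.sat {V Q : Type} (s : Set V) (X : Set Q) : TransForm V Q → Prop
  | .tt => True
  | .ff => False
  | .pos v => v ∈ s
  | .neg v => v ∉ s
  | .atom q => q ∈ X
  | .and f g => f.sat s X ∧ g.sat s X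
  | .or f g => f.sat s X ∨ g.sat s X

/-- `f.occurs q` holds iff location `q` occurs in the transition formula `f`. -/
def TransForm.occurs {V Q : Type} (q : Q) : TransForm V Q → Prop
  | .atom q' => q' = q
  | .and f g => f.occurs q ∨ g.occurs q
  | .or f g => f.occurs q ∨ g.occurs q
  | _ => False

/-- A (co-Büchi) linear weak alternating automaton over propositions `V` and
locations `Q`: initial location, transition function, co-final set `F`, and the
requirement that `q' ⪯ q ↔ q →* q'` is a partial order (reflexivity and
transitivity are automatic; antisymmetry is the actual condition). -/
structure LWAA (V Q : Type) where
  init : Q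
  delta : Q → TransForm V Q
  final : Set Q
  antisymm : ∀ q q' : Q,
    Relation.ReflTransGen (fun a b => (delta a).occurs b) q q' →
    Relation.ReflTransGen (fun a b => (delta a).occurs b) q' q → q = q'

namespace LWAA

variable {V Q : Type}

/-- The configurations `c₀ c₁ …` determined by a sequence of edge sets:
`c₀ = {q₀}` and `c_{i+1} = e_i(c_i)`. -/
def configs (A : LWAA V Q) (e : ℕ → Set (Q × Q)) : ℕ → Set Q
  | 0 => {A.init}
  | i + 1 => {q' | ∃ q ∈ A.configs e i, (q, q') ∈ e i}

/-- `Δ = e₀e₁…` is a run dag of `A` over the temporal structure `σ`. -/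
def IsRunDag (A : LWAA V Q) (σ : ℕ → Set V) (e : ℕ → Set (Q × Q)) : Prop :=
  ∀ i : ℕ,
    (∀ p ∈ e i, p.1 ∈ A.configs e i) ∧
    (∀ p ∈ e i, (A.delta p.1).occurs p.2) ∧
    (∀ q ∈ A.configs e i, (A.delta q).sat (σ i) {q' | (q, q') ∈ e i})

/-- `e₀ … e_n` is a finite run dag of `A` over the finite sequence of states
`s₀ … s_n` (only the values for indices `≤ n` are relevant). -/
def IsFinRunDag (A : LWAA V Q) (s : ℕ → Set V) (e : ℕ → Set (Q × Q)) (n : ℕ) : Prop :=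
  ∀ i ≤ n,
    (∀ p ∈ e i, p.1 ∈ A.configs e i) ∧
    (∀ p ∈ e i, (A.delta p.1).occurs p.2) ∧
    (∀ q ∈ A.configs e i, (A.delta q).sat (s i) {q' | (q, q') ∈ e i})

/-- A path of the run dag given by the edges `e`. -/
def IsPath (A : LWAA V Q) (e : ℕ → Set (Q × Q)) (p : ℕ → Q) : Prop :=
  p 0 = A.init ∧ ∀ i : ℕ, (p i, p (i + 1)) ∈ e i

/-- Co-Büchi acceptance: every path visits `F` only finitely often. -/
def Accepting (A : LWAA V Q) (e : ℕ → Set (Q × Q)) : Prop :=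
  ∀ p : ℕ → Q, A.IsPath e p → {i : ℕ | p i ∈ A.final}.Finite

/-- The language of `A`: temporal structures admitting an accepting run dag. -/
def Lang (A : LWAA V Q) : Set (ℕ → Set V) :=
  {σ | ∃ e : ℕ → Set (Q × Q), A.IsRunDag σ e ∧ A.Accepting e}

/-- An LWAA is simple if whenever a co-final location `q` can be activated
from `q'` while being exited in the same transition, `q'` has an alternative
transition avoiding `q`. -/
def Simple (A : LWAA V Q) : Prop :=
  ∀ q ∈ A.final, ∀ q' : Q, ∀ s : Set V, ∀ X Y : Set Q,
    q ∉ X → q ∉ Y →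
    (A.delta q').sat s (X ∪ {q}) → (A.delta q).sat s Y →
    (A.delta q').sat s (X ∪ Y)

end LWAA

/-!
Prune an accepting run dag level by level. At level `i`, call a co-final location of `c_i`
*leaving* if it has no self-loop in `e_i`. Simplicity lets every transition avoid a leaving
location `r` by taking over `r`'s own successors instead; since the automaton is weak, doing this
for the leaving locations in topological order terminates and removes all of them. In the pruned
run dag a co-final location that stays from some level on must therefore loop in the original
one, which acceptance forbids: each co-final location is absent infinitely often. Pigeonholing
the configurations of the pruned dag then yields the lasso.
-/

open Filter

namespace TransForm

variable {V Q : Type} {s : Set V}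

theorem sat_mono {X Y : Set Q} (h : X ⊆ Y) {f : TransForm V Q} (hf : f.sat s X) : f.sat s Y := by
  induction f with
  | atom q => exact h hf
  | and f g ihf ihg => exact ⟨ihf hf.1, ihg hf.2⟩
  | or f g ihf ihg => exact hf.imp ihf ihg
  | _ => exact hf

theorem sat_inter_occurs {X : Set Q} {f : TransForm V Q} (hf : f.sat s X) :
    f.sat s (X ∩ {q | f.occurs q}) := by
  induction f with
  | atom q => exact ⟨hf, rfl⟩
  | and f g ihf ihg =>
    exact ⟨sat_mono (Set.inter_subset_inter_right _ fun _ => Or.inl) (ihf hf.1),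
      sat_mono (Set.inter_subset_inter_right _ fun _ => Or.inr) (ihg hf.2)⟩
  | or f g ihf ihg =>
    exact hf.imp (fun h => sat_mono (Set.inter_subset_inter_right _ fun _ => Or.inl) (ihf h))
      (fun h => sat_mono (Set.inter_subset_inter_right _ fun _ => Or.inr) (ihg h))
  | _ => exact hf

end TransForm

namespace LWAA

variable {V Q : Type} (A : LWAA V Q)

theorem exists_maximal_mem {S : Finset Q} (hS : S.Nonempty) :
    ∃ r ∈ S, ∀ t ∈ S, (A.delta t).occurs r → t = r := by
  let _ : PartialOrder Q :=
    { le a b := Relation.ReflTransGen (fun x y => (A.delta x).occurs y) b a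
      le_refl _ := .refl
      le_trans _ _ _ hab hbc := hbc.trans hab
      le_antisymm a b hab hba := A.antisymm a b hba hab }
  obtain ⟨r, hr⟩ := S.exists_maximal hS
  exact ⟨r, hr.prop, fun t ht htr => (hr.eq_of_le ht (.single htr)).symm⟩

variable {A} {s : Set V}

theorem Simple.exists_sat_not_mem (hA : A.Simple) {r : Q} (hr : r ∈ A.final) {Y : Set Q}
    (hY : (A.delta r).sat s Y) (hrY : r ∉ Y) {q : Q} {X : Set Q} (hX : (A.delta q).sat s X) :
    ∃ X', (A.delta q).sat s X' ∧ r ∉ X' ∧ X' ⊆ X ∪ Y := by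
  by_cases hrX : r ∈ X
  · refine ⟨X \ {r} ∪ Y, hA r hr q s _ Y (fun h => h.2 rfl) hrY ?_ hY, ?_, ?_⟩
    · rwa [Set.sdiff_union_self, Set.union_eq_left.2 (Set.singleton_subset_iff.2 hrX)]
    · rintro (h | h)
      exacts [h.2 rfl, hrY h]
    · exact Set.union_subset_union_left Y Set.sdiff_subset
  · exact ⟨X, hX, hrX, Set.subset_union_left⟩

theorem Simple.exists_sat_disjoint [Finite Q] (hA : A.Simple) {R : Set Q} (hRF : R ⊆ A.final)
    {E : Q → Set Q}
    (hE : ∀ r ∈ R, (A.delta r).sat s (E r) ∧ r ∉ E r ∧ ∀ t ∈ E r, (A.delta r).occurs t)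
    {q : Q} {X : Set Q} (hX : (A.delta q).sat s X) :
    ∃ X', (A.delta q).sat s X' ∧ Disjoint X' R ∧ X' ⊆ X ∪ ⋃ r ∈ R, E r := by
  classical
  -- `S` over-approximates the locations of `R` still to be removed. Replacing a maximal `r ∈ S`
  -- by `E r` only brings in locations of `S`, and no other location of `S` can bring `r` back.
  suffices h : ∀ S : Finset Q, ↑S ⊆ R → (∀ a ∈ S, E a ∩ R ⊆ S) →
      ∀ X, (A.delta q).sat s X → X ∩ R ⊆ S →
        ∃ X', (A.delta q).sat s X' ∧ Disjoint X' R ∧ X' ⊆ X ∪ ⋃ r ∈ R, E r from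
    h (Set.toFinite R).toFinset (by simp) (by simp) X hX (by simp)
  intro S
  induction S using Finset.strongInduction with
  | H S ih =>
    intro hSR hSE X hX hXS
    rcases S.eq_empty_or_nonempty with rfl | hS
    · refine ⟨X, hX, Set.disjoint_left.2 fun t htX htR => ?_, Set.subset_union_left⟩
      simpa using hXS ⟨htX, htR⟩
    obtain ⟨r, hrS, hr⟩ := A.exists_maximal_mem hS
    obtain ⟨hrE, hrrE, -⟩ := hE r (hSR hrS)
    obtain ⟨X₁, hX₁, hrX₁, hX₁X⟩ := hA.exists_sat_not_mem (hRF (hSR hrS)) hrE hrrE hX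
    have hSR' : ↑(S.erase r) ⊆ R := fun t ht => hSR (Finset.mem_of_mem_erase ht)
    have hSE' : ∀ a ∈ S.erase r, E a ∩ R ⊆ S.erase r := by
      intro a ha t ht
      obtain ⟨har, haS⟩ := Finset.mem_erase.1 ha
      refine Finset.mem_erase.2 ⟨?_, hSE a haS ht⟩
      rintro rfl
      exact har (hr a haS ((hE a (hSR haS)).2.2 t ht.1))
    have hX₁S : X₁ ∩ R ⊆ S.erase r := by
      rintro t ⟨htX₁, htR⟩
      refine Finset.mem_erase.2 ⟨fun htr => hrX₁ (htr ▸ htX₁), ?_⟩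
      rcases hX₁X htX₁ with htX | htE
      exacts [hXS ⟨htX, htR⟩, hSE r hrS ⟨htE, htR⟩]
    obtain ⟨X', hX', hX'R, hX'X₁⟩ := ih _ (Finset.erase_ssubset hrS) hSR' hSE' X₁ hX₁ hX₁S
    refine ⟨X', hX', hX'R, hX'X₁.trans (Set.union_subset ?_ Set.subset_union_right)⟩
    exact hX₁X.trans (Set.union_subset_union_right X (Set.subset_biUnion_of_mem (hSR hrS)))

def succConfigs (A : LWAA V Q) (E : ℕ → Q → Set Q) : ℕ → Set Q
  | 0 => {A.init}
  | i + 1 => ⋃ q ∈ A.succConfigs E i, E i q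

def succEdges (A : LWAA V Q) (E : ℕ → Q → Set Q) (i : ℕ) : Set (Q × Q) :=
  {p | p.1 ∈ A.succConfigs E i ∧ p.2 ∈ E i p.1}

theorem configs_succEdges (E : ℕ → Q → Set Q) : A.configs (A.succEdges E) = A.succConfigs E := by
  funext i
  induction i with
  | zero => rfl
  | succ i ih =>
    ext t
    simp only [configs, succConfigs, succEdges, ih, Set.mem_ofPred_eq, Set.mem_iUnion, exists_prop]
    exact ⟨fun ⟨q, hq, _, ht⟩ => ⟨q, hq, ht⟩, fun ⟨q, hq, ht⟩ => ⟨q, hq, hq, ht⟩⟩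

theorem isRunDag_succEdges {σ : ℕ → Set V} {E : ℕ → Q → Set Q}
    (hocc : ∀ i, ∀ q ∈ A.succConfigs E i, ∀ t ∈ E i q, (A.delta q).occurs t)
    (hsat : ∀ i, ∀ q ∈ A.succConfigs E i, (A.delta q).sat (σ i) (E i q)) :
    A.IsRunDag σ (A.succEdges E) := by
  rw [IsRunDag, configs_succEdges]
  intro i
  refine ⟨fun p hp => hp.1, fun p hp => hocc i p.1 hp.1 p.2 hp.2, fun q hq => ?_⟩
  convert hsat i q hq using 1
  ext t
  exact ⟨fun ht => ht.2, fun ht => ⟨hq, ht⟩⟩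

theorem IsRunDag.exists_successors [Finite Q] (hA : A.Simple) {σ : ℕ → Set V}
    {e : ℕ → Set (Q × Q)} (he : A.IsRunDag σ e) (i : ℕ) (q : Q) :
    ∃ X : Set Q, (∀ t ∈ X, (A.delta q).occurs t) ∧ X ⊆ A.configs e (i + 1) ∧
      (∀ t ∈ X, t ∈ A.final → t ∈ A.configs e i → (t, t) ∈ e i) ∧
      (q ∈ A.configs e i → (A.delta q).sat (σ i) X) := by
  by_cases hq : q ∈ A.configs e i
  swap
  · exact ⟨∅, by simp, by simp, by simp, fun h => absurd h hq⟩
  obtain ⟨-, hocc, hsat⟩ := he i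
  obtain ⟨X, hX, hXR, hXsub⟩ := hA.exists_sat_disjoint
    (R := {t | t ∈ A.final ∧ t ∈ A.configs e i ∧ (t, t) ∉ e i}) (fun t ht => ht.1)
    (E := fun r => {t | (r, t) ∈ e i})
    (fun r hr => ⟨hsat r hr.2.1, hr.2.2, fun t ht => hocc (r, t) ht⟩) (hsat q hq)
  refine ⟨X ∩ {t | (A.delta q).occurs t}, fun t ht => ht.2, ?_, ?_,
    fun _ => TransForm.sat_inter_occurs hX⟩
  · rintro t ⟨htX, -⟩
    rcases hXsub htX with ht | ht
    · exact ⟨q, hq, ht⟩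
    · obtain ⟨r, hr, ht⟩ := Set.mem_iUnion₂.1 ht
      exact ⟨r, hr.2.1, ht⟩
  · intro t ht htF htc
    by_contra hloop
    exact Set.disjoint_left.1 hXR ht.1 ⟨htF, htc, hloop⟩

theorem Simple.exists_pruned_runDag [Finite Q] (hA : A.Simple) {σ : ℕ → Set V}
    {e : ℕ → Set (Q × Q)} (he : A.IsRunDag σ e) :
    ∃ e', A.IsRunDag σ e' ∧ (∀ i, A.configs e' i ⊆ A.configs e i) ∧
      ∀ i, ∀ t ∈ A.final, t ∈ A.configs e' (i + 1) → t ∈ A.configs e i → (t, t) ∈ e i := by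
  choose E hocc hsub hloop hsat using he.exists_successors hA
  have hconf : ∀ i, A.succConfigs E i ⊆ A.configs e i
    | 0 => le_rfl
    | i + 1 => Set.iUnion₂_subset fun q _ => hsub i q
  refine ⟨A.succEdges E, isRunDag_succEdges (fun i q _ => hocc i q)
    (fun i q hq => hsat i q (hconf i hq)), configs_succEdges E ▸ hconf, ?_⟩
  intro i t htF ht
  rw [configs_succEdges] at ht
  obtain ⟨q, -, htq⟩ := Set.mem_iUnion₂.1 ht
  exact hloop i q t htq htF

theorem exists_isPath_of_mem_configs {e : ℕ → Set (Q × Q)} {N : ℕ} {q : Q}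
    (hq : q ∈ A.configs e N) {g : ℕ → Q} (hg0 : g 0 = q)
    (hg : ∀ j, (g j, g (j + 1)) ∈ e (N + j)) : ∃ p, A.IsPath e p ∧ ∀ j, p (N + j) = g j := by
  induction N generalizing q g with
  | zero => exact ⟨g, ⟨hg0.trans hq, by simpa using hg⟩, by simp⟩
  | succ N ih =>
    obtain ⟨q', hq', hq'q⟩ := hq
    obtain ⟨p, hp, hpg⟩ := ih (g := fun j => if j = 0 then q' else g (j - 1)) hq' rfl <| by
      rintro (_ | j)
      · simpa [hg0] using hq'q
      · simpa [Nat.add_right_comm N 1, Nat.add_assoc] using hg j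
    exact ⟨p, hp, fun j => by simpa [Nat.add_right_comm N 1, Nat.add_assoc] using hpg (j + 1)⟩

theorem Accepting.not_mem_final_of_loop {e : ℕ → Set (Q × Q)} (he : A.Accepting e) {N : ℕ}
    {q : Q} (hq : q ∈ A.configs e N) (hloop : ∀ i ≥ N, (q, q) ∈ e i) : q ∉ A.final := by
  intro hqF
  obtain ⟨p, hp, hpq⟩ := A.exists_isPath_of_mem_configs hq (g := fun _ => q) rfl
    fun j => hloop _ (Nat.le_add_right N j)
  refine Set.Ici_infinite N ((he p hp).subset fun i hi => ?_)
  obtain ⟨j, rfl⟩ := Nat.exists_eq_add_of_le hi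
  simpa [hpq j] using hqF

theorem Simple.exists_runDag_frequently_not_mem [Finite Q] (hA : A.Simple) {σ : ℕ → Set V}
    {e : ℕ → Set (Q × Q)} (he : A.IsRunDag σ e) (hacc : A.Accepting e) :
    ∃ e', A.IsRunDag σ e' ∧ ∀ q ∈ A.final, ∃ᶠ i in atTop, q ∉ A.configs e' i := by
  obtain ⟨e', he', hsub, hloop⟩ := hA.exists_pruned_runDag he
  refine ⟨e', he', fun q hqF => ?_⟩
  by_contra h
  obtain ⟨N, hN⟩ := eventually_atTop.1 (not_frequently.1 h)
  simp only [not_not] at hN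
  exact hacc.not_mem_final_of_loop (hsub N (hN N le_rfl))
    (fun i hi => hloop i q hqF (hN (i + 1) (by omega)) (hsub i (hN i hi))) hqF

end LWAA

theorem exists_lasso_of_frequently {β ι : Type*} [Finite β] [Finite ι] (c : ℕ → β)
    {P : ι → ℕ → Prop} (hP : ∀ x, ∃ᶠ i in atTop, P x i) :
    ∃ k n, k ≤ n ∧ c k = c (n + 1) ∧ ∀ x, ∃ j, k ≤ j ∧ j ≤ n ∧ P x j := by
  obtain ⟨C, hC⟩ := Finite.exists_infinite_fiber c
  have hC : (c ⁻¹' {C}).Infinite := Set.infinite_coe_iff.1 hC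
  obtain ⟨k, hk⟩ := hC.nonempty
  choose j hjk hPj using fun x => (hP x).forall_exists_of_atTop k
  obtain ⟨M, hM⟩ := Finite.exists_le j
  obtain ⟨m, hm, hkm⟩ := hC.exists_gt (k + M)
  refine ⟨k, m - 1, by omega, ?_, fun x => ⟨j x, hjk x, by have := hM x; omega, hPj x⟩⟩
  rw [Nat.sub_add_cancel (by omega), hk, hm]

theorem simple_lwaa_nonempty_lasso_general {V Q : Type} [Fintype Q]
    (A : LWAA V Q) (hsimple : A.Simple) (hne : A.Lang.Nonempty) :
    ∃ (n : ℕ) (s : ℕ → Set V) (e : ℕ → Set (Q × Q)) (k : ℕ),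
      A.IsFinRunDag s e n ∧ k ≤ n ∧
      A.configs e k = A.configs e (n + 1) ∧
      (∀ q ∈ A.final, ∃ j : ℕ, k ≤ j ∧ j ≤ n ∧ q ∉ A.configs e j) := by
  obtain ⟨σ, e, he, hacc⟩ := hne
  obtain ⟨e', he', hleave⟩ := hsimple.exists_runDag_frequently_not_mem he hacc
  obtain ⟨k, n, hkn, hcycle, hvisit⟩ := exists_lasso_of_frequently (A.configs e')
    (P := fun (q : A.final) j => ↑q ∉ A.configs e' j) fun q => hleave q q.2
  exact ⟨n, σ, e', k, fun i _ => he' i, hkn, hcycle, fun q hq => hvisit ⟨q, hq⟩⟩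

/-- **Theorem 2, "only if" direction.** If `A` is a simple LWAA with
`L(A) ≠ ∅`, then there are a finite sequence of states `s₀ … s_n`, a finite run
dag `e₀ … e_n` of `A` over it with configurations `c₀ … c_{n+1}`, and `k ≤ n`
such that `c_k = c_{n+1}` and every `q ∈ F` satisfies `q ∉ c_j` for some
`k ≤ j ≤ n`. -/
theorem simple_lwaa_nonempty_lasso {V Q : Type} [Fintype V] [Fintype Q]
    (A : LWAA V Q) (hsimple : A.Simple) (hne : A.Lang.Nonempty) :
    ∃ (n : ℕ) (s : ℕ → Set V) (e : ℕ → Set (Q × Q)) (k : ℕ),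
      A.IsFinRunDag s e n ∧ k ≤ n ∧
      A.configs e k = A.configs e (n + 1) ∧
      (∀ q ∈ A.final, ∃ j : ℕ, k ≤ j ∧ j ≤ n ∧ q ∉ A.configs e j) :=
  simple_lwaa_nonempty_lasso_general A hsimple hne
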